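/- Static regret for S (Optimistic Dual Averaging): In the setting of the strategy S — E a real normed vector space, φ: [0,∞) → [0,+∞] convex with φ(0) = 0, ψ proper and φ-convex, a ∈ E, a^ψ ∈ ∂ψ(a), x̂_t* ∈ E*, x̃_t^ψ = a^ψ − η_t Σ_{i=1}^{t−1} θ_i x_i*, points x̃_t, x_t with x̃_t^ψ ∈ ∂ψ(x̃_t) and x̃_t^ψ − η_t θ_t x̂_t* ∈ ∂ψ(x_t), losses f_t with x_t* ∈ ∂f_t(x_t), and for each t some X_{t+1} with (1/η_{t+1})(x̃_{t+1}^ψ − a^ψ) ∈ ∂ψ̃_t(X_{t+1}) where ψ̃_t(x) = (1/η_t)(ψ(x) − ⟨a^ψ, x⟩) — the following hold for every z ∈ dom ψ with f_t(z) < +∞ for all t: (1) if θ_t ≡ 1 and η_1 ≥ η_2 ≥ … ≥ η_{T+1} > 0, then Σ_{t=1}^T (f_t(x_t) − f_t(z)) ≤ (1/η_{T+1}) B_ψ(z, a^ψ) + Σ_{t=1}^T (1/η_t) φ*(η_t‖x_t* − x̂_t*‖) − Σ_{t=1}^T (1/η_t) B_ψ(x_t, x̃_t^ψ); (2) if η_t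 ≡ 1 and 0 < θ_1 ≤ θ_2 ≤ … ≤ θ_T, then Σ_{t=1}^T (f_t(x_t) − f_t(z)) ≤ (1/θ_1) B_ψ(z, a^ψ) + Σ_{t=1}^T (1/θ_t) φ*(θ_t‖x_t* − x̂_t*‖) − Σ_{t=1}^T (1/θ_t) B_ψ(x_t, x̃_t^ψ). -/

import Mathlib

/-!
`x̃_t` minimises the dual-averaging objective `L_t = (ψ - ⟨a^ψ, ·⟩) / η_t + ⟨∑_{i<t} θ_i x_i*, ·⟩`
and `X_{t+1}` minimises the same objective with `θ_t x_t*` already added. Comparing `x_t` with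
`X_{t+1}` through φ-convexity and Fenchel–Young charges the prediction error `x_t* - x̂_t*` to `φ*`
and leaves the "be-the-leader" sum `∑ ⟨x_t*, X_{t+1} - z⟩ + B_ψ(X_{t+1}, x̃_t^ψ) / (η_t θ_t)`. This
sum telescopes, since consecutive objectives differ by `θ_t x_t*` and by a nonnegative multiple of
`B_ψ(·, a^ψ)`. Both regimes are instances of a single bound, valid whenever `η` is nonincreasing and
`θ` nondecreasing, with weights `1 / (η_t θ_t)`.
-/

open Finset

/-- Fenchel conjugate of an extended-real-valued function on a normed space. -/
noncomputable def fconj {E : Type*} [NormedAddCommGroup E] [NormedSpace ℝ E]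
    (g : E → EReal) (p : E →L[ℝ] ℝ) : EReal :=
  ⨆ x : E, ((p x : ℝ) : EReal) - g x

/-- Generalized Bregman divergence `B_g(x, y*) = g(x) + g*(y*) − ⟨y*, x⟩`. -/
noncomputable def breg {E : Type*} [NormedAddCommGroup E] [NormedSpace ℝ E]
    (g : E → EReal) (x : E) (p : E →L[ℝ] ℝ) : EReal :=
  g x + fconj g p - ((p x : ℝ) : EReal)

/-- Subdifferential: `∂g(x) = {x* : B_g(x, x*) = 0}`. -/
def subdiff {E : Type*} [NormedAddCommGroup E] [NormedSpace ℝ E]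
    (g : E → EReal) (x : E) : Set (E →L[ℝ] ℝ) :=
  {p | breg g x p = 0}

/-- Conjugate of `Φ : [0,∞) → [0,+∞]` : `Φ*(s) = sup_{r ≥ 0} (s·r − Φ(r))`. -/
noncomputable def phiConj (Φ : ℝ → EReal) (s : ℝ) : EReal :=
  ⨆ r : {r : ℝ // 0 ≤ r}, ((s * r.1 : ℝ) : EReal) - Φ r.1

theorem EReal.coe_finset_sum {ι : Type*} (s : Finset ι) (f : ι → ℝ) :
    ((∑ i ∈ s, f i : ℝ) : EReal) = ∑ i ∈ s, (f i : EReal) :=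
  map_sum (⟨⟨(↑), EReal.coe_zero⟩, EReal.coe_add⟩ : ℝ →+ EReal) f s

theorem EReal.coe_add_sum_sub_sum_le {ι : Type*} (s : Finset ι) {a : ℝ} {A : EReal}
    (hA : (a : EReal) ≤ A) {k u b : ι → ℝ} {S B : ι → EReal} (hk : ∀ i ∈ s, 0 ≤ k i)
    (hS : ∀ i ∈ s, (u i : EReal) ≤ S i) (hB : ∀ i ∈ s, B i = b i) :
    ((a + ∑ i ∈ s, k i * u i - ∑ i ∈ s, k i * b i : ℝ) : EReal)
      ≤ A + ∑ i ∈ s, (k i : EReal) * S i - ∑ i ∈ s, (k i : EReal) * B i := by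
  rw [EReal.coe_sub, EReal.coe_add, EReal.coe_finset_sum, EReal.coe_finset_sum]
  refine EReal.sub_le_sub (add_le_add hA (sum_le_sum fun i hi => ?_))
    (sum_congr rfl fun i hi => by rw [hB i hi, EReal.coe_mul]).le
  rw [EReal.coe_mul]
  exact mul_le_mul_of_nonneg_left (hS i hi) (EReal.coe_nonneg.mpr (hk i hi))

theorem sum_le_of_telescoping {T : ℕ} (hT : 1 ≤ T) {r m l w v : ℕ → ℝ} {B : ℝ} (hB : 0 ≤ B)
    (hw : ∀ t ∈ Icc 1 T, 0 ≤ w t) (hw_anti : AntitoneOn w (Set.Icc 1 T))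
    (hv : ∀ t ∈ Icc 1 T, v t ≤ v (t + 1)) (hr : ∀ t ∈ Icc 1 T, r t ≤ w t * (m t - l t))
    (hl : -l 1 ≤ B * v 1) (hml : ∀ t ∈ Ico 1 T, m t ≤ l (t + 1) + B * (v (t + 1) - v t))
    (hm : ∀ t ∈ Icc 1 T, m t ≤ 0) :
    ∑ t ∈ Icc 1 T, r t ≤ w 1 * B * v (T + 1) := by
  have key : ∀ n, 1 ≤ n → n ≤ T → ∑ t ∈ Icc 1 n, r t ≤ w 1 * B * v n + w n * m n := by
    intro n hn
    induction n, hn using Nat.le_induction with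
    | base =>
      intro hT
      have h1 : (1 : ℕ) ∈ Icc 1 T := mem_Icc.mpr ⟨le_rfl, hT⟩
      rw [Icc_self, sum_singleton]
      linarith [hr 1 h1, mul_le_mul_of_nonneg_left hl (hw 1 h1)]
    | succ n hn ih =>
      intro hnT
      have hn' : n ∈ Icc 1 T := mem_Icc.mpr ⟨hn, by omega⟩
      have hn1 : n + 1 ∈ Icc 1 T := mem_Icc.mpr ⟨by omega, hnT⟩
      have hwn : w (n + 1) ≤ w n := hw_anti (mem_Icc.mp hn') (mem_Icc.mp hn1) (by omega)
      have hw1 : w (n + 1) ≤ w 1 := hw_anti ⟨le_rfl, by omega⟩ (mem_Icc.mp hn1) (by omega)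
      have hlink := mul_le_mul_of_nonneg_left (hml n (mem_Ico.mpr ⟨hn, hnT⟩)) (hw _ hn1)
      have hgap := mul_le_mul_of_nonneg_right hw1
        (mul_nonneg hB (sub_nonneg.mpr (hv n hn')))
      have hdrop := mul_le_mul_of_nonpos_right hwn (hm n hn')
      rw [sum_Icc_succ_top (by omega)]
      linarith [ih (by omega), hr (n + 1) hn1]
  have hT' : T ∈ Icc 1 T := mem_Icc.mpr ⟨hT, le_rfl⟩
  have := key T hT le_rfl
  linarith [mul_nonpos_of_nonneg_of_nonpos (hw T hT') (hm T hT'),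
    mul_le_mul_of_nonneg_left (hv T hT') (mul_nonneg (hw 1 (mem_Icc.mpr ⟨le_rfl, hT⟩)) hB)]

section OptimisticDualAveraging

variable {E : Type*} [NormedAddCommGroup E] [NormedSpace ℝ E]

section Subdifferential

variable {g : E → EReal} {x y : E} {p : E →L[ℝ] ℝ}

theorem exists_eq_coe_of_mem_subdiff (h : p ∈ subdiff g y) :
    ∃ c : ℝ, g y = c ∧ fconj g p = ((p y - c : ℝ) : EReal) := by
  have h' : g y + fconj g p - ((p y : ℝ) : EReal) = 0 := h
  generalize g y = u, fconj g p = v at h' ⊢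
  induction u <;> induction v <;> simp_all [← EReal.coe_add, ← EReal.coe_sub] <;> linarith

theorem coe_add_le_of_mem_subdiff (h : p ∈ subdiff g y) (x : E) :
    (((g y).toReal + p (x - y) : ℝ) : EReal) ≤ g x := by
  obtain ⟨c, hc, hconj⟩ := exists_eq_coe_of_mem_subdiff h
  have hx : ((p x : ℝ) : EReal) - g x ≤ ((p y - c : ℝ) : EReal) :=
    hconj ▸ le_iSup (fun x => ((p x : ℝ) : EReal) - g x) x
  rw [hc, EReal.toReal_coe]
  generalize g x = u at hx ⊢
  induction u
  · exact absurd (top_le_iff.mp (EReal.coe_sub_bot _ ▸ hx)) (EReal.coe_ne_top _)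
  · rw [← EReal.coe_sub, EReal.coe_le_coe_iff] at hx
    rw [EReal.coe_le_coe_iff, map_sub]
    linarith
  · exact le_top

theorem ne_bot_of_mem_subdiff (h : p ∈ subdiff g y) (x : E) : g x ≠ ⊥ :=
  ne_bot_of_le_ne_bot (EReal.coe_ne_bot _) (coe_add_le_of_mem_subdiff h x)

theorem ne_top_of_mem_subdiff (h : p ∈ subdiff g y) : g y ≠ ⊤ := by
  obtain ⟨c, hc, -⟩ := exists_eq_coe_of_mem_subdiff h
  simp [hc]

theorem toReal_add_le_of_mem_subdiff (h : p ∈ subdiff g y) (hx : g x ≠ ⊤) :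
    (g y).toReal + p (x - y) ≤ (g x).toReal := by
  have := coe_add_le_of_mem_subdiff h x
  rwa [← EReal.coe_toReal hx (ne_bot_of_mem_subdiff h x), EReal.coe_le_coe_iff] at this

theorem breg_eq_of_mem_subdiff (h : p ∈ subdiff g y) (hx : g x ≠ ⊤) :
    breg g x p = (((g x).toReal - (g y).toReal - p (x - y) : ℝ) : EReal) := by
  obtain ⟨c, hc, hconj⟩ := exists_eq_coe_of_mem_subdiff h
  rw [breg, hconj, ← EReal.coe_toReal hx (ne_bot_of_mem_subdiff h x), hc, EReal.toReal_coe,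
    EReal.toReal_coe, ← EReal.coe_add, ← EReal.coe_sub, map_sub]
  ring_nf

theorem toReal_breg_of_mem_subdiff (h : p ∈ subdiff g y) (hx : g x ≠ ⊤) :
    (breg g x p).toReal = (g x).toReal - (g y).toReal - p (x - y) := by
  rw [breg_eq_of_mem_subdiff h hx, EReal.toReal_coe]

theorem coe_toReal_breg_of_mem_subdiff (h : p ∈ subdiff g y) (hx : g x ≠ ⊤) :
    ((breg g x p).toReal : EReal) = breg g x p := by
  rw [breg_eq_of_mem_subdiff h hx, EReal.toReal_coe]

theorem sub_le_of_mem_subdiff (h : p ∈ subdiff g y) (hx : g x ≠ ⊤) :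
    g y - g x ≤ ((p (y - x) : ℝ) : EReal) := by
  have := toReal_add_le_of_mem_subdiff h hx
  rw [← EReal.coe_toReal hx (ne_bot_of_mem_subdiff h x),
    ← EReal.coe_toReal (ne_top_of_mem_subdiff h) (ne_bot_of_mem_subdiff h y), ← EReal.coe_sub,
    EReal.coe_le_coe_iff, map_sub]
  rw [map_sub] at this
  linarith

end Subdifferential

def IsPhiConvex (Φ : ℝ → EReal) (ψ : E → EReal) : Prop :=
  ∀ (x y : E) (p : E →L[ℝ] ℝ), p ∈ subdiff ψ y → Φ ‖x - y‖ ≤ breg ψ x p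

section PhiConvex

variable {Φ : ℝ → EReal} {ψ : E → EReal} {x y X : E} {p q : E →L[ℝ] ℝ}

theorem IsPhiConvex.coe_sub_le_phiConj (hψ : IsPhiConvex Φ ψ) (hp : p ∈ subdiff ψ x)
    (hX : ψ X ≠ ⊤) (d : E →L[ℝ] ℝ) {s : ℝ} (hs : 0 ≤ s) :
    ((s * d (x - X) - (breg ψ X p).toReal : ℝ) : EReal) ≤ phiConj Φ (s * ‖d‖) := by
  have hd : s * d (x - X) ≤ s * ‖d‖ * ‖X - x‖ := by
    rw [mul_assoc, norm_sub_rev]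
    exact mul_le_mul_of_nonneg_left ((le_abs_self _).trans (d.le_opNorm _)) hs
  have hΦ : Φ ‖X - x‖ ≤ (((breg ψ X p).toReal : ℝ) : EReal) :=
    (coe_toReal_breg_of_mem_subdiff hp hX).symm ▸ hψ X x p hp
  calc ((s * d (x - X) - (breg ψ X p).toReal : ℝ) : EReal)
      ≤ ((s * ‖d‖ * ‖X - x‖ : ℝ) : EReal) - Φ ‖X - x‖ :=
        EReal.coe_sub _ _ ▸ EReal.sub_le_sub (EReal.coe_le_coe_iff.mpr hd) hΦ
    _ ≤ phiConj Φ (s * ‖d‖) :=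
        le_iSup (fun r : {r : ℝ // 0 ≤ r} => ((s * ‖d‖ * r.1 : ℝ) : EReal) - Φ r.1)
          ⟨‖X - x‖, norm_nonneg _⟩

/-- The prediction error `xstar - xhat` is charged to `φ*`: φ-convexity at `x` combined with the
three-point identity for `B_ψ(·, q)`. -/
theorem IsPhiConvex.coe_add_breg_sub_breg_le_phiConj (hψ : IsPhiConvex Φ ψ)
    (hq : q ∈ subdiff ψ y) {s : ℝ} {xhat : E →L[ℝ] ℝ} (hp : q - s • xhat ∈ subdiff ψ x)
    (hX : ψ X ≠ ⊤) (hs : 0 ≤ s) (xstar : E →L[ℝ] ℝ) :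
    ((s * xstar (x - X) + (breg ψ x q).toReal - (breg ψ X q).toReal : ℝ) : EReal)
      ≤ phiConj Φ (s * ‖xstar - xhat‖) := by
  convert hψ.coe_sub_le_phiConj hp hX (xstar - xhat) hs using 2
  rw [toReal_breg_of_mem_subdiff hq (ne_top_of_mem_subdiff hp), toReal_breg_of_mem_subdiff hq hX,
    toReal_breg_of_mem_subdiff hp hX]
  simp only [map_sub, sub_apply, smul_apply, smul_eq_mul]
  ring

end PhiConvex

-- Only meaningful on `dom ψ`: `EReal.toReal` sends `⊤` to `0`.
noncomputable def dualAvgObjective (ψ : E → EReal) (apsi G : E →L[ℝ] ℝ) (η : ℝ) (x : E) : ℝ :=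
  ((ψ x).toReal - apsi x) / η + G x

section DualAveraging

variable {ψ : E → EReal} {apsi G : E →L[ℝ] ℝ} {x y z : E}

theorem dualAvgObjective_add (η : ℝ) (H : E →L[ℝ] ℝ) :
    dualAvgObjective ψ apsi (G + H) η x = dualAvgObjective ψ apsi G η x + H x := by
  simp only [dualAvgObjective, add_apply]
  ring

theorem toReal_breg_eq_mul_dualAvgObjective_sub {η : ℝ} (h : apsi - η • G ∈ subdiff ψ y)
    (hx : ψ x ≠ ⊤) (hη : η ≠ 0) :
    (breg ψ x (apsi - η • G)).toReal
      = η * (dualAvgObjective ψ apsi G η x - dualAvgObjective ψ apsi G η y) := by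
  rw [toReal_breg_of_mem_subdiff h hx]
  simp only [dualAvgObjective, map_sub, sub_apply, smul_apply, smul_eq_mul]
  field_simp
  ring

theorem ne_top_of_mem_subdiff_coe_mul_sub {c : ℝ} (hc : 0 < c) {q : E →L[ℝ] ℝ}
    (h : q ∈ subdiff (fun x => (c : EReal) * (ψ x - ((apsi x : ℝ) : EReal))) y) : ψ y ≠ ⊤ :=
  fun hy => ne_top_of_mem_subdiff h <| by
    simp only [hy, EReal.top_sub_coe, EReal.coe_mul_top_of_pos hc]

theorem dualAvgObjective_le_of_mem_subdiff_coe_mul_sub {η : ℝ} (hη : 0 < η)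
    (h : -G ∈ subdiff (fun x => ((1 / η : ℝ) : EReal) * (ψ x - ((apsi x : ℝ) : EReal))) y)
    (hx : ψ x ≠ ⊤) : dualAvgObjective ψ apsi G η y ≤ dualAvgObjective ψ apsi G η x := by
  have hc : (0 : ℝ) < 1 / η := one_div_pos.mpr hη
  have hval : ∀ x, ψ x ≠ ⊤ → ((1 / η : ℝ) : EReal) * (ψ x - ((apsi x : ℝ) : EReal))
      = ((((ψ x).toReal - apsi x) / η : ℝ) : EReal) := fun x hx => by
    have hbot : ψ x ≠ ⊥ := fun hbot => ne_bot_of_mem_subdiff h x <| by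
      simp only [hbot, EReal.bot_sub, EReal.coe_mul_bot_of_pos hc]
    rw [← EReal.coe_toReal hx hbot, ← EReal.coe_sub, ← EReal.coe_mul, EReal.toReal_coe]
    ring_nf
  have hy := ne_top_of_mem_subdiff_coe_mul_sub hc h
  have := toReal_add_le_of_mem_subdiff h (x := x) (by rw [hval x hx]; exact EReal.coe_ne_top _)
  simp only [hval x hx, hval y hy, EReal.toReal_coe, neg_apply, map_sub] at this
  simp only [dualAvgObjective]
  linarith

theorem apply_sub_add_toReal_breg_div_eq {η θ : ℝ} (h : apsi - η • G ∈ subdiff ψ y)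
    (hx : ψ x ≠ ⊤) (hη : η ≠ 0) (hθ : θ ≠ 0) (g : E →L[ℝ] ℝ) :
    g (x - z) + (breg ψ x (apsi - η • G)).toReal / (η * θ)
      = θ⁻¹ * (dualAvgObjective ψ apsi (G + θ • g) η x - dualAvgObjective ψ apsi (G + θ • g) η z
        - (dualAvgObjective ψ apsi G η y - dualAvgObjective ψ apsi G η z)) := by
  rw [toReal_breg_eq_mul_dualAvgObjective_sub h hx hη, dualAvgObjective_add,
    dualAvgObjective_add]
  simp only [smul_apply, smul_eq_mul, map_sub]
  field_simp
  ring

theorem dualAvgObjective_sub_le_add_breg {a : E} (ha : apsi ∈ subdiff ψ a) (hy : ψ y ≠ ⊤)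
    (hz : ψ z ≠ ⊤) {η η' : ℝ} (hη' : 0 < η') (hle : η' ≤ η)
    (hmin : dualAvgObjective ψ apsi G η x ≤ dualAvgObjective ψ apsi G η y) :
    dualAvgObjective ψ apsi G η x - dualAvgObjective ψ apsi G η z
      ≤ dualAvgObjective ψ apsi G η' y - dualAvgObjective ψ apsi G η' z
        + (breg ψ z apsi).toReal * (η'⁻¹ - η⁻¹) := by
  have hy_a := toReal_add_le_of_mem_subdiff ha hy
  have hgap := mul_nonneg (b := η'⁻¹ - η⁻¹)
    (by rw [map_sub] at hy_a; linarith : 0 ≤ (ψ y).toReal - apsi y - ((ψ a).toReal - apsi a))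
    (sub_nonneg.mpr (inv_anti₀ hη' hle))
  rw [toReal_breg_of_mem_subdiff ha hz, map_sub]
  simp only [dualAvgObjective, div_eq_mul_inv] at hmin ⊢
  linarith

theorem dualAvgObjective_zero_sub_le_breg {a : E} (ha : apsi ∈ subdiff ψ a) (hy : ψ y ≠ ⊤)
    (hz : ψ z ≠ ⊤) {η : ℝ} (hη : 0 < η) :
    dualAvgObjective ψ apsi 0 η z - dualAvgObjective ψ apsi 0 η y
      ≤ (breg ψ z apsi).toReal * η⁻¹ := by
  have hy_a := toReal_add_le_of_mem_subdiff ha hy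
  rw [map_sub] at hy_a
  have := mul_le_mul_of_nonneg_right (by linarith : (ψ a).toReal - apsi a
    ≤ (ψ y).toReal - apsi y) (inv_nonneg.mpr hη.le)
  rw [toReal_breg_of_mem_subdiff ha hz, map_sub]
  simp only [dualAvgObjective, zero_apply, add_zero, div_eq_mul_inv]
  linarith

end DualAveraging

theorem sum_apply_sub_add_breg_le {ψ : E → EReal} {a : E} {apsi : E →L[ℝ] ℝ}
    (ha : apsi ∈ subdiff ψ a) {T : ℕ} (hT : 1 ≤ T) {η θ : ℕ → ℝ}
    (hη : ∀ t ∈ Icc 1 (T + 1), 0 < η t) (hθ : ∀ t ∈ Icc 1 T, 0 < θ t)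
    (hη_anti : ∀ t ∈ Icc 1 T, η (t + 1) ≤ η t) (hθ_mono : MonotoneOn θ (Set.Icc 1 T))
    {xstar xtilpsi : ℕ → E →L[ℝ] ℝ}
    (hxtilpsi : ∀ t ∈ Icc 1 (T + 1), xtilpsi t = apsi - η t • ∑ i ∈ Ico 1 t, θ i • xstar i)
    {xtil X : ℕ → E} (hxtil : ∀ t ∈ Icc 1 T, xtilpsi t ∈ subdiff ψ (xtil t))
    (hX : ∀ t ∈ Icc 1 T, (1 / η (t + 1)) • (xtilpsi (t + 1) - apsi) ∈
      subdiff (fun x => ((1 / η t : ℝ) : EReal) * (ψ x - ((apsi x : ℝ) : EReal))) (X (t + 1)))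
    {z : E} (hz : ψ z ≠ ⊤) :
    ∑ t ∈ Icc 1 T,
        (xstar t (X (t + 1) - z) + (breg ψ (X (t + 1)) (xtilpsi t)).toReal / (η t * θ t))
      ≤ (breg ψ z apsi).toReal / (θ 1 * η (T + 1)) := by
  set G : ℕ → E →L[ℝ] ℝ := fun t => ∑ i ∈ Ico 1 t, θ i • xstar i
  set L : ℕ → E → ℝ := fun t => dualAvgObjective ψ apsi (G t) (η t)
  set M : ℕ → E → ℝ := fun t => dualAvgObjective ψ apsi (G (t + 1)) (η t)
  have hηT (t) (ht : t ∈ Icc 1 T) : 0 < η t := hη t (Icc_subset_Icc_right (by omega) ht)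
  have hη_succ (t) (ht : t ∈ Icc 1 T) : 0 < η (t + 1) := hη (t + 1) (by rw [mem_Icc] at ht ⊢; omega)
  have hxtil' (t) (ht : t ∈ Icc 1 T) : apsi - η t • G t ∈ subdiff ψ (xtil t) :=
    hxtilpsi t (Icc_subset_Icc_right (by omega) ht) ▸ hxtil t ht
  have hxtil_dom (t) (ht : t ∈ Icc 1 T) : ψ (xtil t) ≠ ⊤ := ne_top_of_mem_subdiff (hxtil t ht)
  have hXmin (t) (ht : t ∈ Icc 1 T) (x) (hx : ψ x ≠ ⊤) : M t (X (t + 1)) ≤ M t x := by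
    refine dualAvgObjective_le_of_mem_subdiff_coe_mul_sub (hηT t ht) ?_ hx
    have := hX t ht
    rwa [hxtilpsi (t + 1) (by rw [mem_Icc] at ht ⊢; omega), sub_sub_cancel_left, smul_neg,
      smul_smul, one_div_mul_cancel (hη_succ t ht).ne', one_smul] at this
  have hB0 : 0 ≤ (breg ψ z apsi).toReal := by
    have := toReal_add_le_of_mem_subdiff ha hz
    rw [toReal_breg_of_mem_subdiff ha hz]
    linarith
  have key := sum_le_of_telescoping hT (w := fun t => (θ t)⁻¹) (v := fun t => (η t)⁻¹)
    (r := fun t => xstar t (X (t + 1) - z)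
      + (breg ψ (X (t + 1)) (xtilpsi t)).toReal / (η t * θ t))
    (m := fun t => M t (X (t + 1)) - M t z) (l := fun t => L t (xtil t) - L t z) hB0
    (fun t ht => (inv_pos.mpr (hθ t ht)).le)
    (fun s hs t ht hst => inv_anti₀ (hθ s (mem_Icc.mpr hs)) (hθ_mono hs ht hst))
    (fun t ht => inv_anti₀ (hη_succ t ht) (hη_anti t ht))
    (fun t ht => le_of_eq <| by
      simp only [M, L, G]
      rw [sum_Ico_succ_top (mem_Icc.mp ht).1, hxtilpsi t (Icc_subset_Icc_right (by omega) ht)]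
      exact apply_sub_add_toReal_breg_div_eq (hxtil' t ht)
        (ne_top_of_mem_subdiff_coe_mul_sub (one_div_pos.mpr (hηT t ht)) (hX t ht))
        (hηT t ht).ne' (hθ t ht).ne' (xstar t))
    (by
      have h1 : 1 ∈ Icc 1 T := mem_Icc.mpr ⟨le_rfl, hT⟩
      simpa [L, G] using dualAvgObjective_zero_sub_le_breg ha (hxtil_dom 1 h1) hz (hηT 1 h1))
    (fun t ht => by
      have ht' : t ∈ Icc 1 T := Ico_subset_Icc_self ht
      have ht1 : t + 1 ∈ Icc 1 T := by rw [mem_Ico] at ht; rw [mem_Icc]; omega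
      exact dualAvgObjective_sub_le_add_breg ha (hxtil_dom _ ht1) hz (hη_succ t ht')
        (hη_anti t ht') (hXmin t ht' _ (hxtil_dom _ ht1)))
    (fun t ht => sub_nonpos.mpr (hXmin t ht z hz))
  calc _ ≤ _ := key
    _ = _ := by ring

theorem optimistic_regret_le {Φ : ℝ → EReal} {ψ : E → EReal} (hψ : IsPhiConvex Φ ψ)
    {T : ℕ} (hT : 1 ≤ T) {a : E} {apsi : E →L[ℝ] ℝ} (ha : apsi ∈ subdiff ψ a) {η θ : ℕ → ℝ}
    (hη : ∀ t ∈ Icc 1 (T + 1), 0 < η t) (hθ : ∀ t ∈ Icc 1 T, 0 < θ t)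
    (hη_anti : ∀ t ∈ Icc 1 T, η (t + 1) ≤ η t) (hθ_mono : MonotoneOn θ (Set.Icc 1 T))
    {xhat xstar xtilpsi : ℕ → E →L[ℝ] ℝ}
    (hxtilpsi : ∀ t ∈ Icc 1 (T + 1), xtilpsi t = apsi - η t • ∑ i ∈ Ico 1 t, θ i • xstar i)
    {xtil xt : ℕ → E} (hxtil : ∀ t ∈ Icc 1 T, xtilpsi t ∈ subdiff ψ (xtil t))
    (hxt : ∀ t ∈ Icc 1 T, xtilpsi t - (η t * θ t) • xhat t ∈ subdiff ψ (xt t))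
    {f : ℕ → E → EReal} (hf : ∀ t ∈ Icc 1 T, xstar t ∈ subdiff (f t) (xt t))
    {X : ℕ → E}
    (hX : ∀ t ∈ Icc 1 T, (1 / η (t + 1)) • (xtilpsi (t + 1) - apsi) ∈
      subdiff (fun x => ((1 / η t : ℝ) : EReal) * (ψ x - ((apsi x : ℝ) : EReal))) (X (t + 1)))
    {z : E} (hzdom : ψ z ≠ ⊤) (hz : ∀ t ∈ Icc 1 T, f t z ≠ ⊤) :
    ∑ t ∈ Icc 1 T, (f t (xt t) - f t z) ≤
      ((1 / (θ 1 * η (T + 1)) : ℝ) : EReal) * breg ψ z apsi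
        + ∑ t ∈ Icc 1 T, ((1 / (η t * θ t) : ℝ) : EReal) *
            phiConj Φ (η t * θ t * ‖xstar t - xhat t‖)
        - ∑ t ∈ Icc 1 T, ((1 / (η t * θ t) : ℝ) : EReal) * breg ψ (xt t) (xtilpsi t) := by
  have hs (t) (ht : t ∈ Icc 1 T) : 0 < η t * θ t :=
    mul_pos (hη t (Icc_subset_Icc_right (by omega) ht)) (hθ t ht)
  have hXdom (t) (ht : t ∈ Icc 1 T) : ψ (X (t + 1)) ≠ ⊤ :=
    ne_top_of_mem_subdiff_coe_mul_sub
      (one_div_pos.mpr (hη t (Icc_subset_Icc_right (by omega) ht))) (hX t ht)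
  have hgap (t) (ht : t ∈ Icc 1 T) :=
    hψ.coe_add_breg_sub_breg_le_phiConj (hxtil t ht) (hxt t ht) (hXdom t ht) (hs t ht).le (xstar t)
  have hsplit : ∑ t ∈ Icc 1 T, xstar t (xt t - z)
      = ∑ t ∈ Icc 1 T,
          (xstar t (X (t + 1) - z) + (breg ψ (X (t + 1)) (xtilpsi t)).toReal / (η t * θ t))
        + (∑ t ∈ Icc 1 T, 1 / (η t * θ t) * (η t * θ t * xstar t (xt t - X (t + 1))
            + (breg ψ (xt t) (xtilpsi t)).toReal - (breg ψ (X (t + 1)) (xtilpsi t)).toReal)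
          - ∑ t ∈ Icc 1 T, 1 / (η t * θ t) * (breg ψ (xt t) (xtilpsi t)).toReal) := by
    rw [← sum_sub_distrib, ← sum_add_distrib]
    refine sum_congr rfl fun t ht => ?_
    obtain ⟨hη0, hθ0⟩ := mul_ne_zero_iff.mp (hs t ht).ne'
    rw [map_sub, map_sub, map_sub]
    field_simp
    ring
  have hA : (((breg ψ z apsi).toReal / (θ 1 * η (T + 1)) : ℝ) : EReal)
      ≤ ((1 / (θ 1 * η (T + 1)) : ℝ) : EReal) * breg ψ z apsi := by
    rw [← coe_toReal_breg_of_mem_subdiff ha hzdom, ← EReal.coe_mul, div_eq_inv_mul, one_div,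
      EReal.toReal_coe]
  calc ∑ t ∈ Icc 1 T, (f t (xt t) - f t z)
      ≤ ((∑ t ∈ Icc 1 T, xstar t (xt t - z) : ℝ) : EReal) :=
        (sum_le_sum fun t ht => sub_le_of_mem_subdiff (hf t ht) (hz t ht)).trans_eq
          (EReal.coe_finset_sum _ _).symm
    _ ≤ _ := by
      refine (EReal.coe_le_coe_iff.mpr ?_).trans (EReal.coe_add_sum_sub_sum_le _ hA
        (fun t ht => (one_div_pos.mpr (hs t ht)).le) hgap fun t ht =>
          (coe_toReal_breg_of_mem_subdiff (hxtil t ht) (ne_top_of_mem_subdiff (hxt t ht))).symm)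
      rw [hsplit]
      linarith [sum_apply_sub_add_breg_le ha hT hη hθ hη_anti hθ_mono hxtilpsi hxtil hX hzdom]

end OptimisticDualAveraging

theorem static_regret_S_general
    {E : Type*} [NormedAddCommGroup E] [NormedSpace ℝ E]
    (Φ : ℝ → EReal)
    (ψ : E → EReal)
    (hψ : ∀ (x y : E) (p : E →L[ℝ] ℝ), p ∈ subdiff ψ y → Φ ‖x - y‖ ≤ breg ψ x p)
    (T : ℕ) (hT : 1 ≤ T)
    (a : E) (apsi : E →L[ℝ] ℝ) (ha : apsi ∈ subdiff ψ a)
    (η θ : ℕ → ℝ)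
    (hη : ∀ t ∈ Icc 1 (T + 1), 0 < η t) (hθ : ∀ t ∈ Icc 1 T, 0 < θ t)
    (xhat xstar : ℕ → E →L[ℝ] ℝ)
    (xtilpsi : ℕ → E →L[ℝ] ℝ)
    (hxtilpsi : ∀ t ∈ Icc 1 (T + 1),
      xtilpsi t = apsi - η t • ∑ i ∈ Ico 1 t, θ i • xstar i)
    (xtil xt : ℕ → E)
    (hxtil : ∀ t ∈ Icc 1 T, xtilpsi t ∈ subdiff ψ (xtil t))
    (hxt : ∀ t ∈ Icc 1 T, xtilpsi t - (η t * θ t) • xhat t ∈ subdiff ψ (xt t))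
    (f : ℕ → E → EReal)
    (hf : ∀ t ∈ Icc 1 T, xstar t ∈ subdiff (f t) (xt t))
    (X : ℕ → E)
    (hX : ∀ t ∈ Icc 1 T,
      (1 / η (t + 1)) • (xtilpsi (t + 1) - apsi) ∈
        subdiff (fun x => ((1 / η t : ℝ) : EReal) * (ψ x - ((apsi x : ℝ) : EReal)))
          (X (t + 1)))
    (z : E) (hzdom : ψ z < ⊤) (hz : ∀ t ∈ Icc 1 T, f t z < ⊤) :
    ((∀ t ∈ Icc 1 T, θ t = 1) → (∀ t ∈ Icc 1 T, η (t + 1) ≤ η t) →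
      ∑ t ∈ Icc 1 T, (f t (xt t) - f t z) ≤
        ((1 / η (T + 1) : ℝ) : EReal) * breg ψ z apsi
        + (∑ t ∈ Icc 1 T, ((1 / η t : ℝ) : EReal) *
            phiConj Φ (η t * ‖xstar t - xhat t‖))
        - ∑ t ∈ Icc 1 T, ((1 / η t : ℝ) : EReal) * breg ψ (xt t) (xtilpsi t))
    ∧
    ((∀ t ∈ Icc 1 (T + 1), η t = 1) → (∀ s t : ℕ, 1 ≤ s → s ≤ t → t ≤ T → θ s ≤ θ t) →
      ∑ t ∈ Icc 1 T, (f t (xt t) - f t z) ≤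
        ((1 / θ 1 : ℝ) : EReal) * breg ψ z apsi
        + (∑ t ∈ Icc 1 T, ((1 / θ t : ℝ) : EReal) *
            phiConj Φ (θ t * ‖xstar t - xhat t‖))
        - ∑ t ∈ Icc 1 T, ((1 / θ t : ℝ) : EReal) * breg ψ (xt t) (xtilpsi t)) := by
  have regret := fun hη_anti hθ_mono => optimistic_regret_le (Φ := Φ) hψ hT ha hη hθ hη_anti
    hθ_mono hxtilpsi hxtil hxt hf hX hzdom.ne fun t ht => (hz t ht).ne
  have h1 : 1 ∈ Icc 1 T := mem_Icc.mpr ⟨le_rfl, hT⟩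
  refine ⟨fun hθ1 hη_anti => ?_, fun hη1 hθ_mono => ?_⟩
  · have := regret hη_anti fun s hs t ht _ =>
      ((hθ1 s (mem_Icc.mpr hs)).trans (hθ1 t (mem_Icc.mpr ht)).symm).le
    simpa (disch := assumption) only [hθ1, h1, mul_one, one_mul] using this
  · have hη1' (t) (ht : t ∈ Icc 1 T) : η t = 1 := hη1 t (Icc_subset_Icc_right (by omega) ht)
    have := regret (fun t ht => by rw [hη1' t ht, hη1 (t + 1) (by rw [mem_Icc] at ht ⊢; omega)])
      fun s hs t ht hst => hθ_mono s t hs.1 hst ht.2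
    simpa (disch := assumption) only [hη1', hη1 (T + 1) (mem_Icc.mpr ⟨by omega, le_rfl⟩),
      mul_one, one_mul] using this

/-- **Static regret for the strategy S (Optimistic Dual Averaging).** -/
theorem static_regret_S
    {E : Type*} [NormedAddCommGroup E] [NormedSpace ℝ E]
    (Φ : ℝ → EReal)
    (hΦconv : ∀ a b s t : ℝ, 0 ≤ a → 0 ≤ b → a + b = 1 → 0 ≤ s → 0 ≤ t →
      Φ (a * s + b * t) ≤ (a : EReal) * Φ s + (b : EReal) * Φ t)
    (hΦ0 : Φ 0 = 0) (hΦnn : ∀ s : ℝ, 0 ≤ s → 0 ≤ Φ s)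
    (ψ : E → EReal) (hbot : ∀ x, ψ x ≠ ⊥) (hproper : ∃ x, ψ x ≠ ⊤)
    (hψ : ∀ (x y : E) (p : E →L[ℝ] ℝ), p ∈ subdiff ψ y → Φ ‖x - y‖ ≤ breg ψ x p)
    (T : ℕ) (hT : 1 ≤ T)
    (a : E) (apsi : E →L[ℝ] ℝ) (ha : apsi ∈ subdiff ψ a)
    (η θ : ℕ → ℝ)
    (hη : ∀ t ∈ Icc 1 (T + 1), 0 < η t) (hθ : ∀ t ∈ Icc 1 T, 0 < θ t)
    (xhat xstar : ℕ → E →L[ℝ] ℝ)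
    (xtilpsi : ℕ → E →L[ℝ] ℝ)
    (hxtilpsi : ∀ t ∈ Icc 1 (T + 1),
      xtilpsi t = apsi - η t • ∑ i ∈ Ico 1 t, θ i • xstar i)
    (xtil xt : ℕ → E)
    (hxtil : ∀ t ∈ Icc 1 T, xtilpsi t ∈ subdiff ψ (xtil t))
    (hxt : ∀ t ∈ Icc 1 T, xtilpsi t - (η t * θ t) • xhat t ∈ subdiff ψ (xt t))
    (f : ℕ → E → EReal)
    (hf : ∀ t ∈ Icc 1 T, xstar t ∈ subdiff (f t) (xt t))
    (X : ℕ → E)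
    (hX : ∀ t ∈ Icc 1 T,
      (1 / η (t + 1)) • (xtilpsi (t + 1) - apsi) ∈
        subdiff (fun x => ((1 / η t : ℝ) : EReal) * (ψ x - ((apsi x : ℝ) : EReal)))
          (X (t + 1)))
    (z : E) (hzdom : ψ z < ⊤) (hz : ∀ t ∈ Icc 1 T, f t z < ⊤) :
    ((∀ t ∈ Icc 1 T, θ t = 1) → (∀ t ∈ Icc 1 T, η (t + 1) ≤ η t) →
      ∑ t ∈ Icc 1 T, (f t (xt t) - f t z) ≤
        ((1 / η (T + 1) : ℝ) : EReal) * breg ψ z apsi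
        + (∑ t ∈ Icc 1 T, ((1 / η t : ℝ) : EReal) *
            phiConj Φ (η t * ‖xstar t - xhat t‖))
        - ∑ t ∈ Icc 1 T, ((1 / η t : ℝ) : EReal) * breg ψ (xt t) (xtilpsi t))
    ∧
    ((∀ t ∈ Icc 1 (T + 1), η t = 1) → (∀ s t : ℕ, 1 ≤ s → s ≤ t → t ≤ T → θ s ≤ θ t) →
      ∑ t ∈ Icc 1 T, (f t (xt t) - f t z) ≤
        ((1 / θ 1 : ℝ) : EReal) * breg ψ z apsi
        + (∑ t ∈ Icc 1 T, ((1 / θ t : ℝ) : EReal) *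
            phiConj Φ (θ t * ‖xstar t - xhat t‖))
        - ∑ t ∈ Icc 1 T, ((1 / θ t : ℝ) : EReal) * breg ψ (xt t) (xtilpsi t)) :=
  static_regret_S_general Φ ψ hψ T hT a apsi ha η θ hη hθ xhat xstar xtilpsi hxtilpsi xtil xt hxtil
    hxt f hf X hX z hzdom hz
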